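/- The alternating sum Σ_{i≥0} (−1)^i sch_ν(i) equals 1, where sch_ν(i) is the number of ν-Schröder paths with i diagonal steps. -/

import Mathlib

/-- Steps of a (Schröder) lattice path: north, east, diagonal. -/
inductive Step : Type
  | N | E | D
deriving DecidableEq, Repr

/-- Total horizontal displacement of a path. -/
def eLen (p : List Step) : ℕ := p.count Step.E + p.count Step.D

/-- Total vertical displacement of a path. -/
def nLen (p : List Step) : ℕ := p.count Step.N + p.count Step.D

/-- A lattice path uses only `N` and `E` steps. -/
def IsLatticePath (ν : List Step) : Prop := Step.D ∉ ν

/-- `colVal p x` is twice the starting height of the step of `p` crossing the vertical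
strip between abscissas `x` and `x+1`, plus `1` if that step is diagonal.  Comparing these
values columnwise is equivalent to comparing the heights of the paths over each strip. -/
def colVal : List Step → ℕ → ℕ
  | [], _ => 0
  | Step.N :: p, x => colVal p x + 2
  | Step.E :: _, 0 => 0
  | Step.E :: p, x+1 => colVal p x
  | Step.D :: _, 0 => 1
  | Step.D :: p, x+1 => colVal p x + 2

/-- `π` stays weakly above `ρ` (same endpoints intended). -/
def WeaklyAbove (π ρ : List Step) : Prop := ∀ x, colVal ρ x ≤ colVal π x

/-- Replace every peak (consecutive `NE`) of a path by a diagonal step; applied to `ν`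
this gives the path `μ` of the large ν-Schröder path definition. -/
def cutPeaks : List Step → List Step
  | [] => []
  | Step.N :: Step.E :: p => Step.D :: cutPeaks p
  | s :: p => s :: cutPeaks p

/-- A ν-Dyck path: an `N,E` path with the same endpoints as `ν` staying weakly above `ν`. -/
def IsNuDyck (ν π : List Step) : Prop :=
  Step.D ∉ π ∧ eLen π = eLen ν ∧ nLen π = nLen ν ∧ WeaklyAbove π ν

/-- A (small) ν-Schröder path: an `N,E,D` path with the same endpoints as `ν` staying weakly
above `ν` (this automatically forbids diagonal steps on the ν-diagonal). -/
def IsSmallSchroder (ν π : List Step) : Prop :=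
  eLen π = eLen ν ∧ nLen π = nLen ν ∧ WeaklyAbove π ν

/-- A large ν-Schröder path: an `N,E,D` path with the same endpoints as `ν` staying weakly
above the path obtained from `ν` by replacing each peak by a diagonal step. -/
def IsLargeSchroder (ν π : List Step) : Prop :=
  eLen π = eLen ν ∧ nLen π = nLen ν ∧ WeaklyAbove π (cutPeaks ν)

/-- Number of peaks (consecutive `NE` pairs). -/
def peaks (p : List Step) : ℕ := (p.zip p.tail).count (Step.N, Step.E)

/-- Number of valleys (consecutive `EN` pairs). -/
def valleys (p : List Step) : ℕ := (p.zip p.tail).count (Step.E, Step.N)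

/-- Lattice points at which valleys of a path occur (starting the path at `(x,y)`). -/
def valleyPts : List Step → ℕ → ℕ → List (ℕ × ℕ)
  | [], _, _ => []
  | Step.E :: p, x, y =>
      (if p.head? = some Step.N then [(x+1, y)] else []) ++ valleyPts p (x+1) y
  | Step.N :: p, x, y => valleyPts p x (y+1)
  | Step.D :: p, x, y => valleyPts p (x+1) (y+1)

/-- Lattice points at which high peaks (peaks strictly above `ν`) of a path occur. -/
def highPeakPts (ν : List Step) : List Step → ℕ → ℕ → List (ℕ × ℕ)
  | [], _, _ => []
  | Step.N :: p, x, y =>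
      (if p.head? = some Step.E ∧ colVal ν x < 2*(y+1) then [(x, y+1)] else []) ++
        highPeakPts ν p x (y+1)
  | Step.E :: p, x, y => highPeakPts ν p (x+1) y
  | Step.D :: p, x, y => highPeakPts ν p (x+1) (y+1)

/-- Number of high peaks of `π` relative to `ν`. -/
def highPeaks (ν π : List Step) : ℕ := (highPeakPts ν π 0 0).length

/-- j-th ν-Narayana number: number of ν-Dyck paths with exactly `j` valleys. -/
noncomputable def Nar (ν : List Step) (j : ℕ) : ℕ :=
  Nat.card {π : List Step // IsNuDyck ν π ∧ valleys π = j}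

/-- Number of small ν-Schröder paths with exactly `i` diagonal steps. -/
noncomputable def schNum (ν : List Step) (i : ℕ) : ℕ :=
  Nat.card {π : List Step // IsSmallSchroder ν π ∧ π.count Step.D = i}

/-- `lowH ν x` is the lowest height of a point of `ν` at abscissa `x`. -/
def lowH : List Step → ℕ → ℕ
  | _, 0 => 0
  | [], _+1 => 0
  | Step.N :: p, x+1 => lowH p (x+1) + 1
  | Step.E :: p, x+1 => lowH p x
  | Step.D :: p, x+1 => lowH p x + 1

/-- The lowest lattice path from `(0,0)` to `(b,a)` weakly above the line segment
from `(0,0)` to `(b,a)`. -/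
def nuAB (a b : ℕ) : List Step :=
  (List.range b).flatMap (fun x =>
    List.replicate (((x+1)*a + b - 1)/b - (x*a + b - 1)/b) Step.N ++ [Step.E])

/-- Number of large rational `(a,b)`-Schröder paths with `i` diagonal steps. -/
noncomputable def largeCount (a b i : ℕ) : ℕ :=
  Nat.card {π : List Step // IsLargeSchroder (nuAB a b) π ∧ π.count Step.D = i}

/-- Number of small rational `(a,b)`-Schröder paths with `i` diagonal steps. -/
noncomputable def smallCount (a b i : ℕ) : ℕ :=
  Nat.card {π : List Step // IsSmallSchroder (nuAB a b) π ∧ π.count Step.D = i}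

/-- Binomial coefficient with an integer lower entry (zero when negative). -/
def chooseZ (n : ℕ) (k : ℤ) : ℕ := if 0 ≤ k then n.choose k.toNat else 0

/-- The region weakly above `ν` in the rectangle `[0,b] × [0,a]`. -/
def InRegion (ν : List Step) (p : ℕ × ℕ) : Prop :=
  p.1 ≤ eLen ν ∧ p.2 ≤ nLen ν ∧ lowH ν p.1 ≤ p.2

/-- Two points of the region are ν-incompatible if one is strictly southwest of the other and
the rectangle they span lies in the region (equivalently its bottom-right corner does). -/
def Incompat (ν : List Step) (p q : ℕ × ℕ) : Prop :=
  ((p.1 < q.1 ∧ p.2 < q.2) ∨ (q.1 < p.1 ∧ q.2 < p.2)) ∧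
    InRegion ν (max p.1 q.1, min p.2 q.2)

/-- A ν-binary tree: a maximal set of pairwise ν-compatible points of the region. -/
def IsBinaryTree (ν : List Step) (T : Finset (ℕ × ℕ)) : Prop :=
  (∀ p ∈ T, InRegion ν p) ∧ (∀ p ∈ T, ∀ q ∈ T, ¬ Incompat ν p q) ∧
    ∀ r, InRegion ν r → (∀ p ∈ T, ¬ Incompat ν r p) → r ∈ T

/-- A ν-Schröder tree: pairwise ν-compatible points of the region containing the root
`(0,a)` and meeting every row and every column. -/
def IsSchroderTree (ν : List Step) (T : Finset (ℕ × ℕ)) : Prop :=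
  (∀ p ∈ T, InRegion ν p) ∧ (∀ p ∈ T, ∀ q ∈ T, ¬ Incompat ν p q) ∧
    (0, nLen ν) ∈ T ∧ (∀ y ≤ nLen ν, ∃ p ∈ T, p.2 = y) ∧ (∀ x ≤ eLen ν, ∃ p ∈ T, p.1 = x)

/-- One contraction step: delete a node, provided the result is still a ν-Schröder tree. -/
def ContractStep (ν : List Step) (T T' : Finset (ℕ × ℕ)) : Prop :=
  ∃ q ∈ T, T' = T.erase q ∧ IsSchroderTree ν T'

/-- `p` is a leaf of the (plane tree associated to the) node set `T`: no node strictly below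
it in its column and none strictly to its right in its row. -/
def IsLeafIn (T : Finset (ℕ × ℕ)) (p : ℕ × ℕ) : Prop :=
  (∀ q ∈ T, ¬(q.1 = p.1 ∧ q.2 < p.2)) ∧ (∀ q ∈ T, ¬(q.2 = p.2 ∧ p.1 < q.1))

/-- Starting points of vertical runs and ending points of horizontal runs of `ν`. -/
def leafPts (ν : List Step) : Finset (ℕ × ℕ) :=
  (valleyPts ν 0 0).toFinset ∪ (if ν.head? = some Step.N then {((0 : ℕ), (0 : ℕ))} else ∅) ∪
    (if ν.getLast? = some Step.E then {(eLen ν, nLen ν)} else ∅)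

/-- `horizNu ν x y`: maximal number of east steps that can be placed starting at `(x,y)`
before crossing `ν` (staying within the bounding rectangle). -/
def horizNu (ν : List Step) (x y : ℕ) : ℕ :=
  ((Finset.Icc 1 (eLen ν - x)).filter (fun k => lowH ν (x + k) ≤ y)).card

/-- No `N` step of the given path (started at `(x,y)`) has initial point with
`horizNu`-value `h`. -/
def noNAt (ν : List Step) (h : ℕ) : List Step → ℕ → ℕ → Prop
  | [], _, _ => True
  | Step.N :: p, x, y => horizNu ν x y ≠ h ∧ noNAt ν h p x (y+1)
  | Step.E :: p, x, y => noNAt ν h p (x+1) y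
  | Step.D :: p, x, y => noNAt ν h p (x+1) (y+1)

/-- Right contraction: replace a consecutive `EN` pair (a valley) by a `D` step. -/
def RightC (μ lam : List Step) : Prop :=
  ∃ p q, μ = p ++ Step.E :: Step.N :: q ∧ lam = p ++ Step.D :: q

/-- Left contraction: delete an `E` step together with the most recent preceding `N` step
whose initial point has the same `horizNu` statistic as the initial point of the `E` step,
shift the intermediate subpath, and place a `D` step at the initial point of the `N` step. -/
def LeftC (ν μ lam : List Step) : Prop :=
  ∃ p m q, μ = p ++ Step.N :: (m ++ Step.E :: q) ∧ lam = p ++ Step.D :: (m ++ q) ∧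
    horizNu ν (eLen p) (nLen p)
      = horizNu ν (eLen (p ++ Step.N :: m)) (nLen (p ++ Step.N :: m)) ∧
    noNAt ν (horizNu ν (eLen (p ++ Step.N :: m)) (nLen (p ++ Step.N :: m)))
      m (eLen p) (nLen p + 1)

/-- Diagonal contraction: delete an `E` step ending at the initial point `r` of a `D` step,
together with the most recent preceding `N` step whose initial point `s` satisfies
`horizNu s = horizNu r`, shift the intermediate subpath, and place a `D` step at `s`. -/
def DiagC (ν μ lam : List Step) : Prop :=
  ∃ p m q, μ = p ++ Step.N :: (m ++ Step.E :: Step.D :: q) ∧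
    lam = p ++ Step.D :: (m ++ Step.D :: q) ∧
    horizNu ν (eLen p) (nLen p)
      = horizNu ν (eLen (p ++ Step.N :: m) + 1) (nLen (p ++ Step.N :: m)) ∧
    noNAt ν (horizNu ν (eLen (p ++ Step.N :: m) + 1) (nLen (p ++ Step.N :: m)))
      m (eLen p) (nLen p + 1)

/-- Cover relation of the contraction poset of ν-Schröder paths. -/
def Covers (ν μ lam : List Step) : Prop :=
  IsSmallSchroder ν μ ∧ IsSmallSchroder ν lam ∧
    (RightC μ lam ∨ LeftC ν μ lam ∨ DiagC ν μ lam)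

/-- The Morse matching: `σ` (having a `D` step preceded by no valley) is matched with the
path `π` obtained by replacing the first such `D` step by `EN`. -/
def MorseM (ν : List Step) : Set (List Step × List Step) :=
  { z | ∃ p q, Step.D ∉ p ∧ valleys p = 0 ∧
      z.2 = p ++ Step.D :: q ∧ z.1 = p ++ Step.E :: Step.N :: q ∧ IsSmallSchroder ν z.2 }

/-- Twice the area between a small ν-Schröder path and `ν`. -/
def area2 (ν π : List Step) : ℕ :=
  ∑ x ∈ Finset.range (eLen ν), (colVal π x - colVal ν x)

/-- An `(I,J̄)`-forest: increasing, non-crossing arcs. -/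
def IsIJForest (I J : Finset ℕ) (F : Finset (ℕ × ℕ)) : Prop :=
  (∀ a ∈ F, a.1 ∈ I ∧ a.2 ∈ J ∧ a.1 < a.2) ∧
    (∀ a ∈ F, ∀ a' ∈ F, ¬(a.1 < a'.1 ∧ a'.1 < a.2 ∧ a.2 < a'.2))

/-- A covering `(I,J̄)`-forest: contains the arc `(1,n)` and has no isolated node. -/
def IsCoveringForest (n : ℕ) (I J : Finset ℕ) (F : Finset (ℕ × ℕ)) : Prop :=
  IsIJForest I J F ∧ (1, n) ∈ F ∧
    (∀ i ∈ I, ∃ a ∈ F, a.1 = i) ∧ (∀ j ∈ J, ∃ a ∈ F, a.2 = j)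

/-- The lattice path read off from the interleaving of `I` and `J̄` (elements `2,…,n-1`,
`E` for elements of `I`, `N` for the others). -/
def nuOf (n : ℕ) (I : Finset ℕ) : List Step :=
  (List.range' 2 (n - 2)).map (fun k => if k ∈ I then Step.E else Step.N)

/-! Toggle the first diagonal step or valley of a path, `D ↔ EN`. This is an involution on
ν-Schröder paths that changes the number of diagonal steps by one. It keeps a path weakly above
the lattice path `ν`: a `D` step and the valley `EN` replacing it have the same integer part of
height over their column, and `ν` has integer heights there. Its only fixed point is the path
`N^a E^b`, which has no diagonal step, so the alternating sum is `1`. -/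

instance : Fintype Step :=
  ⟨{Step.N, Step.E, Step.D}, fun s => by cases s <;> simp⟩

section PathStatistics

variable (p : List Step)

@[simp] lemma eLen_cons_N : eLen (Step.N :: p) = eLen p := by simp [eLen]
@[simp] lemma eLen_cons_E : eLen (Step.E :: p) = eLen p + 1 := by
  simp [eLen]; omega
@[simp] lemma eLen_cons_D : eLen (Step.D :: p) = eLen p + 1 := by
  simp [eLen]; omega
@[simp] lemma nLen_cons_N : nLen (Step.N :: p) = nLen p + 1 := by
  simp [nLen]; omega
@[simp] lemma nLen_cons_E : nLen (Step.E :: p) = nLen p := by simp [nLen]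
@[simp] lemma nLen_cons_D : nLen (Step.D :: p) = nLen p + 1 := by
  simp [nLen]; omega

lemma length_le_nLen_add_eLen : p.length ≤ nLen p + eLen p := by
  induction p with
  | nil => simp
  | cons s q ih => cases s <;> simp <;> omega

lemma colVal_le_two_mul_nLen : ∀ x, colVal p x ≤ 2 * nLen p := by
  induction p with
  | nil => simp [colVal]
  | cons s q ih =>
    intro x
    cases s <;> cases x <;> simp only [colVal, nLen_cons_N, nLen_cons_E, nLen_cons_D] <;>
      grind

end PathStatistics

lemma IsLatticePath.even_colVal {p : List Step} (h : IsLatticePath p) :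
    ∀ x, Even (colVal p x) := by
  induction p with
  | nil => simp [colVal]
  | cons s q ih =>
    intro x
    cases s <;> cases x <;> simp_all [IsLatticePath, colVal, Nat.even_add]

def cornerPath (a b : ℕ) : List Step := List.replicate a Step.N ++ List.replicate b Step.E

lemma cornerPath_succ_left (a b : ℕ) : cornerPath (a + 1) b = Step.N :: cornerPath a b := rfl

lemma cornerPath_zero_succ (b : ℕ) : cornerPath 0 (b + 1) = Step.E :: cornerPath 0 b := rfl

@[simp] lemma eLen_cornerPath (a b : ℕ) : eLen (cornerPath a b) = b := by
  simp [cornerPath, eLen, List.count_replicate]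

@[simp] lemma nLen_cornerPath (a b : ℕ) : nLen (cornerPath a b) = a := by
  simp [cornerPath, nLen, List.count_replicate]

@[simp] lemma count_D_cornerPath (a b : ℕ) : (cornerPath a b).count Step.D = 0 := by
  simp [cornerPath, List.count_replicate]

lemma colVal_cornerPath (a b x : ℕ) : colVal (cornerPath a b) x = 2 * a := by
  induction a with
  | zero =>
    induction b generalizing x with
    | zero => rfl
    | succ b ih => cases x <;> simp [cornerPath_zero_succ, colVal, ih]
  | succ a ih => rw [cornerPath_succ_left, colVal, ih]; ring

/-- Replace the first diagonal step by a valley `EN`, or the first valley by a diagonal step,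
whichever comes first. -/
def toggle : List Step → List Step
  | [] => []
  | Step.D :: q => Step.E :: Step.N :: q
  | Step.N :: q => Step.N :: toggle q
  | [Step.E] => [Step.E]
  | Step.E :: Step.N :: q => Step.D :: q
  | Step.E :: Step.E :: q => Step.E :: toggle (Step.E :: q)
  | Step.E :: Step.D :: q => Step.E :: toggle (Step.D :: q)

lemma toggle_cons_N (q : List Step) : toggle (Step.N :: q) = Step.N :: toggle q := rfl

lemma head?_toggle_cons_E_ne (q : List Step) : (toggle (Step.E :: q)).head? ≠ some Step.N := by
  rcases q with _ | ⟨_ | _ | _, _⟩ <;> simp [toggle]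

lemma toggle_cons_E_of_head?_ne {r : List Step} (h : r.head? ≠ some Step.N) :
    toggle (Step.E :: r) = Step.E :: toggle r := by
  rcases r with _ | ⟨_ | _ | _, _⟩ <;> simp_all [toggle]

lemma toggle_toggle (π : List Step) : toggle (toggle π) = π := by
  induction π using toggle.induct with
  | case3 q ih => rw [toggle_cons_N, toggle_cons_N, ih]
  | case6 q ih =>
    rw [toggle, toggle_cons_E_of_head?_ne (head?_toggle_cons_E_ne q), ih]
  | _ => rfl

lemma eLen_toggle (π : List Step) : eLen (toggle π) = eLen π := by
  induction π using toggle.induct <;> simp_all [toggle]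

lemma nLen_toggle (π : List Step) : nLen (toggle π) = nLen π := by
  induction π using toggle.induct <;> simp_all [toggle]

lemma neg_one_pow_count_D_toggle {π : List Step} (h : toggle π ≠ π) :
    (-1 : ℤ) ^ (toggle π).count Step.D = -(-1) ^ π.count Step.D := by
  induction π using toggle.induct <;> simp_all [toggle, pow_succ]

lemma colVal_toggle_div_two (π : List Step) (x : ℕ) :
    colVal (toggle π) x / 2 = colVal π x / 2 := by
  induction π using toggle.induct generalizing x <;> cases x <;> simp_all [toggle, colVal]

lemma toggle_cornerPath (a b : ℕ) : toggle (cornerPath a b) = cornerPath a b := by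
  induction a with
  | zero =>
    induction b with
    | zero => rfl
    | succ b ih =>
      rw [cornerPath_zero_succ, toggle_cons_E_of_head?_ne, ih]
      cases b <;> simp [cornerPath, List.replicate_succ]
  | succ a ih => rw [cornerPath_succ_left, toggle_cons_N, ih]

lemma toggle_eq_self_iff {π : List Step} :
    toggle π = π ↔ π = cornerPath (nLen π) (eLen π) := by
  refine ⟨fun h => ?_, fun h => h ▸ toggle_cornerPath _ _⟩
  induction π using toggle.induct with
  | case3 q ih =>
    rw [toggle_cons_N, List.cons.injEq] at h
    rw [nLen_cons_N, eLen_cons_N, cornerPath_succ_left, ← ih h.2]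
  | case6 q ih =>
    have hq : Step.E :: q = cornerPath (nLen q) (eLen q + 1) := by
      simpa using ih (List.cons_injective h)
    have hN : nLen q = 0 := by
      rcases hn : nLen q with _ | n
      · rfl
      · rw [hn, cornerPath_succ_left] at hq
        simp at hq
    rw [hN] at hq
    rw [nLen_cons_E, nLen_cons_E, hN, eLen_cons_E, eLen_cons_E, cornerPath_zero_succ, ← hq]
  | case1 | case4 => rfl
  | _ => simp [toggle] at h

lemma weaklyAbove_toggle {ν π : List Step} (hν : IsLatticePath ν) (h : WeaklyAbove π ν) :
    WeaklyAbove (toggle π) ν := by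
  intro x
  obtain ⟨k, hk⟩ := hν.even_colVal x
  have := h x
  have := colVal_toggle_div_two π x
  omega

lemma IsSmallSchroder.toggle {ν π : List Step} (hν : IsLatticePath ν)
    (h : IsSmallSchroder ν π) : IsSmallSchroder ν (toggle π) :=
  ⟨(eLen_toggle π).trans h.1, (nLen_toggle π).trans h.2.1, weaklyAbove_toggle hν h.2.2⟩

lemma isSmallSchroder_cornerPath (ν : List Step) :
    IsSmallSchroder ν (cornerPath (nLen ν) (eLen ν)) :=
  ⟨eLen_cornerPath _ _, nLen_cornerPath _ _, fun x => by
    rw [colVal_cornerPath]; exact colVal_le_two_mul_nLen ν x⟩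

lemma finite_setOf_isSmallSchroder (ν : List Step) : {π | IsSmallSchroder ν π}.Finite :=
  (List.finite_length_le Step (nLen ν + eLen ν)).subset fun π h => by
    simpa only [Set.mem_ofPred_eq, ← h.1, ← h.2.1] using length_le_nLen_add_eLen π

noncomputable def schroderPaths (ν : List Step) : Finset (List Step) :=
  (finite_setOf_isSmallSchroder ν).toFinset

@[simp] lemma mem_schroderPaths {ν π : List Step} :
    π ∈ schroderPaths ν ↔ IsSmallSchroder ν π :=
  Set.Finite.mem_toFinset _

lemma schNum_eq_card_filter (ν : List Step) (i : ℕ) :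
    schNum ν i = ((schroderPaths ν).filter (fun π => π.count Step.D = i)).card := by
  rw [schNum, ← Nat.card_eq_finsetCard]
  exact Nat.card_congr (Equiv.subtypeEquivRight fun π => by simp)

lemma sum_range_neg_one_pow_mul_schNum (ν : List Step) :
    ∑ i ∈ Finset.range (eLen ν + 1), (-1 : ℤ) ^ i * schNum ν i
      = ∑ π ∈ schroderPaths ν, (-1 : ℤ) ^ π.count Step.D := by
  have hmaps : ∀ π ∈ schroderPaths ν, π.count Step.D ∈ Finset.range (eLen ν + 1) := by
    intro π hπ
    have : eLen π = eLen ν := (mem_schroderPaths.1 hπ).1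
    rw [Finset.mem_range, ← this, eLen]
    omega
  rw [← Finset.sum_fiberwise_of_maps_to hmaps]
  refine Finset.sum_congr rfl fun i _ => ?_
  rw [schNum_eq_card_filter, Finset.sum_congr rfl fun π hπ => by rw [(Finset.mem_filter.1 hπ).2],
    Finset.sum_const, nsmul_eq_mul, mul_comm]

/-- The alternating sum `Σ_i (−1)ⁱ sch_ν(i)` equals `1`. -/
theorem alternating_sum_schroder (ν : List Step) (hν : IsLatticePath ν) :
    ∑ i ∈ Finset.range (eLen ν + 1), (-1 : ℤ)^i * schNum ν i = 1 := by
  set c := cornerPath (nLen ν) (eLen ν)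
  have hc : c ∈ schroderPaths ν := mem_schroderPaths.2 (isSmallSchroder_cornerPath ν)
  have hfixed : ∀ π ∈ schroderPaths ν, toggle π = π ↔ π = c := by
    intro π hπ
    obtain ⟨hE, hN, -⟩ := mem_schroderPaths.1 hπ
    rw [toggle_eq_self_iff, hE, hN]
  have hmoved : ∀ π ∈ (schroderPaths ν).erase c, toggle π ≠ π := fun π hπ =>
    (hfixed π (Finset.mem_of_mem_erase hπ)).not.2 (Finset.ne_of_mem_erase hπ)
  have hcancel : ∑ π ∈ (schroderPaths ν).erase c, (-1 : ℤ) ^ π.count Step.D = 0 := by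
    refine Finset.sum_involution (fun π _ => toggle π)
      (fun π hπ => by rw [neg_one_pow_count_D_toggle (hmoved π hπ), add_neg_cancel])
      (fun π hπ _ => hmoved π hπ) (fun π hπ => Finset.mem_erase.2 ⟨fun h => ?_, ?_⟩)
      (fun π _ => toggle_toggle π)
    · exact Finset.ne_of_mem_erase hπ (by rw [← toggle_toggle π, h, toggle_cornerPath])
    · exact mem_schroderPaths.2 ((mem_schroderPaths.1 (Finset.mem_of_mem_erase hπ)).toggle hν)
  rw [sum_range_neg_one_pow_mul_schNum, ← Finset.add_sum_erase _ _ hc, hcancel,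
    count_D_cornerPath, pow_zero, add_zero]
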